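/- arXiv:1906.06735 — 3 statements merged into one kernel-verified Lean document; each statement's English description precedes it below -/
import Mathlib

section
/- Define the linear operator Θ on the space of real arrays S = (S_{jl})_{0 ≤ j ≤ l ≤ N-1} by (ΘS)_{jl} = 2Γ_{jl} 1_{j≠l}(S_{jj}+S_{ll}-2S_{jl}) + ∑_{n∉{j,l}} [Γ_{ln}(S_{jn}-S_{jl}) + Γ_{jn}(S_{nl}-S_{jl})], with the convention that S_{jl} for j > l denotes S_{lj}. Then Θ is self-adjoint with respect to the inner product ⟨T, T̃⟩ = ∑_{0 ≤ j ≤ l ≤ N-1} T_{jl} T̃_{jl}. -/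
/-! On symmetric arrays, `Θ S = L S + S L + C S`, where `L = Γ - diag (Γ 1)` is the graph
Laplacian of `Γ` acting on rows and on columns, and `C` couples each off-diagonal entry to the two
diagonal entries in its row and column. The triangle inner product is half the Frobenius pairing
plus half the pairing of the diagonals. Summation by parts (pairing each term of a double sum with
its image under an index swap, using the symmetry of `Γ`, `S` and `T`) turns `2 ⟨Θ S, T⟩` into
`-thetaForm Γ S T`, a bilinear form that is visibly symmetric in `S` and `T`. -/

open Matrix Finset

/-- The second-moment coupling operator `Θ` acting on symmetric arrays
`S = (S_{jl})`, where the convention `S_{jl} = S_{lj}` for `j > l` is encoded by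
working with symmetric functions `S : Fin N → Fin N → ℝ`. -/
def Theta {N : ℕ} (Γ : Matrix (Fin N) (Fin N) ℝ) (S : Fin N → Fin N → ℝ) :
    Fin N → Fin N → ℝ :=
  fun j l =>
    (if j ≠ l then 2 * Γ j l * (S j j + S l l - 2 * S j l) else 0)
      + ∑ n ∈ (Finset.univ.erase j).erase l,
          (Γ l n * (S j n - S j l) + Γ j n * (S n l - S j l))

/-- The inner product `⟨T, T̃⟩ = ∑_{0 ≤ j ≤ l ≤ N-1} T_{jl} T̃_{jl}` on the
triangle. -/
def triInner {N : ℕ} (T T' : Fin N → Fin N → ℝ) : ℝ :=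
  ∑ j, ∑ l, if j ≤ l then T j l * T' j l else 0

theorem sum_sum_eq_of_add_swap {ι M : Type*} [Fintype ι] [AddCommGroup M] [IsAddTorsionFree M]
    {f g : ι → ι → M} (h : ∀ i j, f i j + f j i = g i j + g j i) :
    ∑ i, ∑ j, f i j = ∑ i, ∑ j, g i j := by
  have hsymm (F : ι → ι → M) : 2 • ∑ i, ∑ j, F i j = ∑ i, ∑ j, (F i j + F j i) := by
    rw [two_nsmul]
    nth_rewrite 2 [sum_comm]
    simp only [sum_add_distrib]
  apply nsmul_right_injective two_ne_zero
  simp only [hsymm, h]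

theorem two_mul_sum_upper_triangle {ι : Type*} [Fintype ι] [LinearOrder ι] {f : ι → ι → ℝ}
    (hf : ∀ i j, f i j = f j i) :
    2 * ∑ i, ∑ j, (if i ≤ j then f i j else 0) = ∑ i, ∑ j, f i j + ∑ i, f i i := by
  have hlower : ∑ i, ∑ j, (if j ≤ i then f i j else 0) = ∑ i, ∑ j, (if i ≤ j then f i j else 0) := by
    rw [sum_comm]
    simp only [hf]
  have hsplit (i j : ι) : ((if i ≤ j then f i j else 0) + if j ≤ i then f i j else 0)
      = f i j + if i = j then f i j else 0 := by
    rcases lt_trichotomy i j with h | rfl | h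
    · simp [h.le, h.not_ge, h.ne]
    · simp
    · simp [h.le, h.not_ge, h.ne']
  rw [two_mul]
  nth_rewrite 2 [← hlower]
  simp only [← sum_add_distrib, hsplit]
  simp only [sum_add_distrib, sum_ite_eq, mem_univ, if_true]

section Laplacian

variable {ι : Type*} [Fintype ι]

def laplacian (w : ι → ι → ℝ) (u : ι → ℝ) (i : ι) : ℝ :=
  ∑ k, w i k * (u k - u i)

theorem two_mul_sum_laplacian_mul {w : ι → ι → ℝ} (hw : ∀ i k, w i k = w k i) (u v : ι → ℝ) :
    2 * ∑ i, laplacian w u i * v i = -∑ i, ∑ k, w i k * (u k - u i) * (v k - v i) := by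
  simp only [laplacian, mul_sum, sum_mul, ← sum_neg_distrib]
  refine sum_sum_eq_of_add_swap fun i k => ?_
  rw [hw k i]
  ring

end Laplacian

theorem theta_eq_laplacian {N : ℕ} {Γ : Matrix (Fin N) (Fin N) ℝ} (hΓ : Γ.IsSymm)
    {S : Fin N → Fin N → ℝ} (hS : ∀ j l, S j l = S l j) (j l : Fin N) :
    Theta Γ S j l = Γ j l * (S j j + S l l - 2 * S j l)
      + laplacian Γ (S j) l + laplacian Γ (S l) j := by
  set g : Fin N → ℝ := fun n => Γ l n * (S j n - S j l) + Γ j n * (S n l - S j l)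
  have hlap : laplacian Γ (S j) l + laplacian Γ (S l) j = ∑ n, g n := by
    simp only [laplacian, ← sum_add_distrib]
    exact sum_congr rfl fun n _ => by rw [hS l n, hS l j]
  -- The terms `n = j` and `n = l` missing from the sum in `Theta` make up half its coupling term.
  rw [Theta, add_assoc, hlap, ← add_sum_erase _ _ (mem_univ j)]
  by_cases hjl : j = l
  · subst hjl
    simp [g, ← two_mul]
  · rw [← add_sum_erase _ _ (mem_erase.2 ⟨Ne.symm hjl, mem_univ l⟩)]
    simp only [g, ne_eq, hjl, not_false_eq_true, if_true, hΓ.apply j l]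
    ring

theorem theta_symm {N : ℕ} {Γ : Matrix (Fin N) (Fin N) ℝ} (hΓ : Γ.IsSymm)
    {S : Fin N → Fin N → ℝ} (hS : ∀ j l, S j l = S l j) (j l : Fin N) :
    Theta Γ S j l = Theta Γ S l j := by
  rw [theta_eq_laplacian hΓ hS, theta_eq_laplacian hΓ hS, hΓ.apply l j, hS l j]
  ring

def thetaForm {N : ℕ} (Γ : Matrix (Fin N) (Fin N) ℝ) (S T : Fin N → Fin N → ℝ) : ℝ :=
  ∑ j, ∑ l, ∑ n, Γ l n * (S j n - S j l) * (T j n - T j l)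
    + 2 * ∑ j, ∑ l, Γ j l * (S j l - S j j) * (T j l - T j j)

theorem thetaForm_comm {N : ℕ} (Γ : Matrix (Fin N) (Fin N) ℝ) (S T : Fin N → Fin N → ℝ) :
    thetaForm Γ S T = thetaForm Γ T S := by
  simp only [thetaForm, mul_right_comm (Γ _ _)]

theorem two_mul_triInner_theta {N : ℕ} {Γ : Matrix (Fin N) (Fin N) ℝ} (hΓ : Γ.IsSymm)
    {S T : Fin N → Fin N → ℝ} (hS : ∀ j l, S j l = S l j) (hT : ∀ j l, T j l = T l j) :
    2 * triInner (Theta Γ S) T = -thetaForm Γ S T := by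
  have hlap : ∑ j, ∑ l, laplacian Γ (S l) j * T j l = ∑ j, ∑ l, laplacian Γ (S j) l * T j l := by
    rw [sum_comm]
    simp only [hT]
  have hrows : 2 * ∑ j, ∑ l, laplacian Γ (S j) l * T j l
      = -∑ j, ∑ l, ∑ n, Γ l n * (S j n - S j l) * (T j n - T j l) := by
    rw [mul_sum, ← sum_neg_distrib]
    exact sum_congr rfl fun j _ => two_mul_sum_laplacian_mul (fun l n => hΓ.apply n l) (S j) (T j)
  have hcoupling : ∑ j, ∑ l, Γ j l * (S j j + S l l - 2 * S j l) * T j l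
      + 2 * ∑ j, laplacian Γ (S j) j * T j j
      = -(2 * ∑ j, ∑ l, Γ j l * (S j l - S j j) * (T j l - T j j)) := by
    simp only [laplacian, sum_mul, mul_sum, ← sum_neg_distrib, ← sum_add_distrib]
    refine sum_sum_eq_of_add_swap fun j l => ?_
    rw [hΓ.apply j l, hS l j, hT l j]
    ring
  have hdiag : ∑ j, Γ j j * (S j j + S j j - 2 * S j j) * T j j = 0 :=
    sum_eq_zero fun j _ => by ring
  rw [triInner, two_mul_sum_upper_triangle fun j l => by rw [theta_symm hΓ hS, hT]]
  simp only [theta_eq_laplacian hΓ hS, add_mul, sum_add_distrib, hlap, thetaForm]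
  linear_combination hrows + hcoupling + hdiag

theorem triInner_comm {N : ℕ} (T T' : Fin N → Fin N → ℝ) : triInner T T' = triInner T' T := by
  simp only [triInner, mul_comm]

theorem stmt8_general {N : ℕ} (Γ : Matrix (Fin N) (Fin N) ℝ)
    (hsym : Γ.IsSymm)
    (T T' : Fin N → Fin N → ℝ)
    (hT : ∀ j l, T j l = T l j) (hT' : ∀ j l, T' j l = T' l j) :
    triInner (Theta Γ T) T' = triInner T (Theta Γ T') := by
  apply mul_left_cancel₀ (two_ne_zero' ℝ)
  rw [triInner_comm T, two_mul_triInner_theta hsym hT hT', two_mul_triInner_theta hsym hT' hT,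
    thetaForm_comm]

/-- `Θ` is self-adjoint with respect to the inner product
`⟨T, T̃⟩ = ∑_{j ≤ l} T_{jl} T̃_{jl}`. -/
theorem stmt8 {N : ℕ} (Γ : Matrix (Fin N) (Fin N) ℝ)
    (hsym : Γ.IsSymm) (hoff : ∀ j l : Fin N, j ≠ l → 0 ≤ Γ j l)
    (T T' : Fin N → Fin N → ℝ)
    (hT : ∀ j l, T j l = T l j) (hT' : ∀ j l, T' j l = T' l j) :
    triInner (Theta Γ T) T' = triInner T (Theta Γ T') :=
  stmt8_general Γ hsym T T' hT hT'
end

section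
/- Let -λ be the largest eigenvalue of A = Γ - Φ acting on mean mode powers, and let -μ be the largest eigenvalue of Θ - Ψ governing the second moments, where Ψ S_{jl} = (Λ_j + Λ_l) S_{jl}. Then μ ≤ 2λ (equivalently, the exponential growth rate 2λ - μ of the relative intensity fluctuations is nonnegative). -/
/-!
`A = Γ - diag Λ` is symmetric with nonnegative off-diagonal entries, so for a top eigenvector `v`
the vector `w = |v|` has at least the same Rayleigh quotient and is therefore itself a top
eigenvector, with `A w = -λ w` and `w ≥ 0`. For the product array `S_{jl} = w_j w_l` one computes
`((Θ - Ψ) S)_{jl} = -2λ S_{jl} + Γ_{jl} (w_j - w_l)² ≥ -2λ S_{jl}`.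
On symmetric arrays `Θ - Ψ` is self-adjoint for `⟨S, T⟩ = ∑_{j ≤ l} S_{jl} T_{jl}`, so its
Rayleigh quotients are bounded by its top eigenvalue `-μ`, while the one at `S` is at least `-2λ`.
-/

open Matrix Finset

/-- The diagonal dissipation operator `(Ψ S)_{jl} = (Λ_j + Λ_l) S_{jl}`. -/
def Psi {N : ℕ} (Λ : Fin N → ℝ) (S : Fin N → Fin N → ℝ) : Fin N → Fin N → ℝ :=
  fun j l => (Λ j + Λ l) * S j l

open Module.End RealInnerProductSpace

namespace LinearMap.IsSymmetric

variable {E : Type*} [NormedAddCommGroup E] [InnerProductSpace ℝ E] [FiniteDimensional ℝ E]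
  {T : E →ₗ[ℝ] E}

lemma inner_smul_sub_apply_eq_sum (hT : T.IsSymmetric) {n : ℕ} (hn : Module.finrank ℝ E = n)
    (c : ℝ) (x : E) :
    ⟪c • x - T x, x⟫ =
      ∑ i, (c - hT.eigenvalues hn i) * (hT.eigenvectorBasis hn).repr x i ^ 2 := by
  rw [← (hT.eigenvectorBasis hn).repr.inner_map_map, PiLp.inner_apply]
  refine sum_congr rfl fun i _ => ?_
  simp only [map_sub, map_smul, PiLp.sub_apply, PiLp.smul_apply, smul_eq_mul,
    hT.eigenvectorBasis_apply_self_apply, Real.ringHom_apply, RCLike.inner_apply]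
  ring

lemma inner_apply_self_le (hT : T.IsSymmetric) {c : ℝ} (hc : ∀ μ, HasEigenvalue T μ → μ ≤ c)
    (x : E) : ⟪T x, x⟫ ≤ c * ⟪x, x⟫ := by
  have : 0 ≤ ⟪c • x - T x, x⟫ :=
    hT.inner_smul_sub_apply_eq_sum rfl c x ▸ sum_nonneg fun i _ =>
      mul_nonneg (sub_nonneg.2 (hc _ (hT.hasEigenvalue_eigenvalues rfl i))) (sq_nonneg _)
  rwa [inner_sub_left, real_inner_smul_left, sub_nonneg] at this

lemma apply_eq_smul_of_inner_apply_self_eq (hT : T.IsSymmetric) {c : ℝ}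
    (hc : ∀ μ, HasEigenvalue T μ → μ ≤ c) {x : E} (hx : ⟪T x, x⟫ = c * ⟪x, x⟫) :
    T x = c • x := by
  have hterm (i) :
      0 ≤ (c - hT.eigenvalues rfl i) * (hT.eigenvectorBasis rfl).repr x i ^ 2 :=
    mul_nonneg (sub_nonneg.2 (hc _ (hT.hasEigenvalue_eigenvalues rfl i))) (sq_nonneg _)
  have hsum := hT.inner_smul_sub_apply_eq_sum rfl c x
  rw [inner_sub_left, real_inner_smul_left, hx, sub_self, eq_comm,
    sum_eq_zero_iff_of_nonneg fun i _ => hterm i] at hsum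
  refine (sub_eq_zero.1 ((hT.eigenvectorBasis rfl).repr.injective ?_)).symm
  ext i
  rw [map_sub, map_smul, map_zero, PiLp.sub_apply, PiLp.smul_apply,
    hT.eigenvectorBasis_apply_self_apply, smul_eq_mul, PiLp.zero_apply]
  obtain h | h := mul_eq_zero.1 (hsum i (mem_univ i))
  · simp [← sub_mul, h]
  · simp [(pow_eq_zero_iff two_ne_zero).1 h]

end LinearMap.IsSymmetric

namespace Matrix

variable {ι : Type*} [Fintype ι] {A : Matrix ι ι ℝ}

lemma dotProduct_mulVec_le_abs (hA : ∀ i j, i ≠ j → 0 ≤ A i j) (v : ι → ℝ) :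
    v ⬝ᵥ A *ᵥ v ≤ |v| ⬝ᵥ A *ᵥ |v| := by
  simp only [dotProduct, mulVec, mul_sum, Pi.abs_apply]
  refine sum_le_sum fun i _ => sum_le_sum fun j _ => ?_
  rcases eq_or_ne i j with rfl | hij
  · exact le_of_eq (by linear_combination (-A i i) * abs_mul_abs_self (v i))
  · have : v i * v j ≤ |v i| * |v j| := abs_mul (v i) (v j) ▸ le_abs_self _
    nlinarith [hA i j hij]

/-- Perron–Frobenius for symmetric Metzler matrices: since `|v|` has at least the Rayleigh
quotient of `v`, it is again a top eigenvector. -/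
lemma IsSymm.mulVec_abs_eq_smul (hA : A.IsSymm) (hoff : ∀ i j, i ≠ j → 0 ≤ A i j) {c : ℝ}
    (htop : ∀ μ (u : ι → ℝ), u ≠ 0 → A *ᵥ u = μ • u → μ ≤ c) {v : ι → ℝ}
    (hv : A *ᵥ v = c • v) : A *ᵥ |v| = c • |v| := by
  classical
  have hT : (toEuclideanLin A).IsSymmetric :=
    isSymmetric_toEuclideanLin_iff.2 (isHermitian_iff_isSymm.2 hA)
  have hc (μ : ℝ) (hμ : HasEigenvalue (toEuclideanLin A) μ) : μ ≤ c := by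
    obtain ⟨u, hu⟩ := hμ.exists_hasEigenvector
    refine htop μ u.ofLp (fun h => hu.2 (by simpa using congrArg (WithLp.toLp 2) h)) ?_
    simpa using congrArg WithLp.ofLp hu.apply_eq_smul
  have hge : c * ⟪WithLp.toLp 2 |v|, WithLp.toLp 2 |v|⟫ ≤
      ⟪toEuclideanLin A (WithLp.toLp 2 |v|), WithLp.toLp 2 |v|⟫ :=
    calc c * ⟪WithLp.toLp 2 |v|, WithLp.toLp 2 |v|⟫ = c * (v ⬝ᵥ v) := by
          rw [EuclideanSpace.inner_eq_star_dotProduct]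
          simp [dotProduct, abs_mul_abs_self]
      _ = v ⬝ᵥ A *ᵥ v := by rw [hv, dotProduct_smul, smul_eq_mul]
      _ ≤ |v| ⬝ᵥ A *ᵥ |v| := dotProduct_mulVec_le_abs hoff v
      _ = _ := by simp [EuclideanSpace.inner_eq_star_dotProduct]
  simpa using congrArg WithLp.ofLp (hT.apply_eq_smul_of_inner_apply_self_eq hc
    (le_antisymm (hT.inner_apply_self_le hc _) hge))

end Matrix

lemma Finset.sum_sym2_mk_add_sum_diag {α M : Type*} [Fintype α] [DecidableEq α]
    [AddCommMonoid M] (f : Sym2 α → M) :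
    ∑ i, ∑ j, f s(i, j) + ∑ i, f s(i, i) = 2 • ∑ z, f z := by
  -- an unordered pair has total weight 2: from its two orderings, or from the doubled diagonal
  have hfiber (z : Sym2 α) :
      ∑ p ∈ univ.filter (fun p : α × α => s(p.1, p.2) = z),
        (if p.1 = p.2 then 2 else 1) = 2 := by
    induction z using Sym2.ind with | _ a b => ?_
    have : ({p : α × α | s(p.1, p.2) = s(a, b)} : Finset _) = {(a, b), (b, a)} := by
      ext ⟨x, y⟩
      simp
    rw [this]
    rcases eq_or_ne a b with rfl | hab
    · simp
    · rw [sum_pair (by simp [hab])]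
      simp [hab, hab.symm]
  calc ∑ i, ∑ j, f s(i, j) + ∑ i, f s(i, i)
      = ∑ p : α × α, (if p.1 = p.2 then 2 else 1) • f s(p.1, p.2) := by
        rw [Fintype.sum_prod_type, ← sum_add_distrib]
        refine sum_congr rfl fun i _ => ?_
        rw [← Fintype.sum_ite_eq i (fun j => f s(i, j)), ← sum_add_distrib]
        refine sum_congr rfl fun j _ => ?_
        split_ifs <;> simp_all [two_smul]
    _ = ∑ z, ∑ p ∈ univ.filter (fun p : α × α => s(p.1, p.2) = z),
          (if p.1 = p.2 then 2 else 1) • f z := by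
        rw [← sum_fiberwise univ (fun p : α × α => s(p.1, p.2))
          (fun p => (if p.1 = p.2 then 2 else 1) • f s(p.1, p.2))]
        refine sum_congr rfl fun z _ => sum_congr rfl fun p hp => ?_
        rw [(mem_filter.1 hp).2]
    _ = 2 • ∑ z, f z := by
        simp only [← sum_smul, hfiber, smul_sum]

lemma Sym2.apply_inf_sup_mk {α β : Type*} [LinearOrder α] {X : α → α → β}
    (hX : ∀ j l, X j l = X l j) (j l : α) : X s(j, l).inf s(j, l).sup = X j l := by
  rcases le_total j l with h | h
  · simp [h]
  · simp [h, hX j l]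

section SecondMoments

variable {N : ℕ} {Γ : Matrix (Fin N) (Fin N) ℝ} {Λ : Fin N → ℝ}

lemma theta_apply_eq (hrow : ∀ j, ∑ n, Γ j n = 0) (hsym : Γ.IsSymm) (S : Fin N → Fin N → ℝ)
    (j l : Fin N) :
    Theta Γ S j l = ∑ n, Γ l n * S j n + ∑ n, Γ j n * S n l
      + Γ j l * (S j j + S l l - 2 * S j l) := by
  have hfull : ∑ n, (Γ l n * (S j n - S j l) + Γ j n * (S n l - S j l))
      = ∑ n, Γ l n * S j n + ∑ n, Γ j n * S n l := by
    simp only [mul_sub, sum_add_distrib, sum_sub_distrib, ← sum_mul, hrow, zero_mul,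
      sub_zero]
  rw [← hfull, ← sum_erase_add _ _ (mem_univ j), Theta]
  by_cases h : j = l
  · subst h
    simp [two_mul]
  · rw [← sum_erase_add _ _ (mem_erase.2 ⟨Ne.symm h, mem_univ l⟩), hsym.apply j l]
    simp only [ne_eq, h, not_false_eq_true, ↓reduceIte, sub_self, mul_zero, zero_add, add_zero]
    ring

lemma theta_apply_self (hrow : ∀ j, ∑ n, Γ j n = 0) (hsym : Γ.IsSymm)
    {S : Fin N → Fin N → ℝ} (hS : ∀ j l, S j l = S l j) (j : Fin N) :
    Theta Γ S j j = 2 * ∑ n, Γ j n * S j n := by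
  rw [theta_apply_eq hrow hsym]
  simp [hS _ j, two_mul]

def secondMomentGen (Γ : Matrix (Fin N) (Fin N) ℝ) (Λ : Fin N → ℝ) :
    (Fin N → Fin N → ℝ) →ₗ[ℝ] Fin N → Fin N → ℝ where
  toFun S j l := Theta Γ S j l - Psi Λ S j l
  map_add' S T := by
    ext j l
    simp only [Theta, Psi, Pi.add_apply, mul_sub, mul_add, sum_add_distrib, sum_sub_distrib]
    split_ifs <;> ring
  map_smul' c S := by
    ext j l
    simp only [Theta, Psi, Pi.smul_apply, smul_eq_mul, RingHom.id_apply, mul_sub, mul_add,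
      mul_left_comm _ c, ← mul_sum, sum_add_distrib, sum_sub_distrib]
    split_ifs <;> ring

lemma secondMomentGen_apply (S : Fin N → Fin N → ℝ) (j l : Fin N) :
    secondMomentGen Γ Λ S j l = Theta Γ S j l - Psi Λ S j l := rfl

lemma secondMomentGen_symm (hrow : ∀ j, ∑ n, Γ j n = 0) (hsym : Γ.IsSymm)
    {S : Fin N → Fin N → ℝ} (hS : ∀ j l, S j l = S l j) (j l : Fin N) :
    secondMomentGen Γ Λ S j l = secondMomentGen Γ Λ S l j := by
  have h₁ : ∑ n, Γ l n * S j n = ∑ n, Γ l n * S n j := sum_congr rfl fun n _ => by rw [hS]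
  have h₂ : ∑ n, Γ j n * S n l = ∑ n, Γ j n * S l n := sum_congr rfl fun n _ => by rw [hS]
  simp only [secondMomentGen_apply, theta_apply_eq hrow hsym, Psi, h₁, h₂, hS l j,
    hsym.apply j l]
  ring

/-- On symmetric arrays this is twice `∑_{j ≤ l} S_{jl} T_{jl}`, the pairing for which `Θ - Ψ`
is self-adjoint. -/
def symInner (S T : Fin N → Fin N → ℝ) : ℝ :=
  ∑ j, ∑ l, S j l * T j l + ∑ j, S j j * T j j

lemma symInner_theta (hrow : ∀ j, ∑ n, Γ j n = 0) (hsym : Γ.IsSymm)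
    {S T : Fin N → Fin N → ℝ} (hS : ∀ j l, S j l = S l j) (hT : ∀ j l, T j l = T l j) :
    symInner T (Theta Γ S) =
      ∑ j, ∑ l, ∑ n, T j l * (Γ l n * S j n) + ∑ j, ∑ l, ∑ n, S j l * (Γ l n * T j n)
        + 2 * ∑ j, ∑ l, T j j * (Γ j l * S j l) + 2 * ∑ j, ∑ l, S j j * (Γ j l * T j l)
        - 2 * ∑ j, ∑ l, T j l * (Γ j l * S j l) := by
  have hswap_jl : ∑ j, ∑ l, ∑ n, T j l * (Γ j n * S n l)
      = ∑ j, ∑ l, ∑ n, T j l * (Γ l n * S j n) := by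
    rw [sum_comm]
    refine sum_congr rfl fun a _ => sum_congr rfl fun b _ => sum_congr rfl fun n _ => ?_
    rw [hT b a, hS n a]
  have hswap_ln : ∑ j, ∑ l, ∑ n, T j l * (Γ l n * S j n)
      = ∑ j, ∑ l, ∑ n, S j l * (Γ l n * T j n) := by
    refine sum_congr rfl fun j _ => ?_
    rw [sum_comm]
    refine sum_congr rfl fun a _ => sum_congr rfl fun b _ => ?_
    rw [hsym.apply a b]
    ring
  have hdiag_left : ∑ j, ∑ l, T j l * (Γ j l * S j j) = ∑ j, ∑ l, S j j * (Γ j l * T j l) :=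
    sum_congr rfl fun j _ => sum_congr rfl fun l _ => by ring
  have hdiag_right :
      ∑ j, ∑ l, T j l * (Γ j l * S l l) = ∑ j, ∑ l, S j j * (Γ j l * T j l) := by
    rw [sum_comm]
    refine sum_congr rfl fun a _ => sum_congr rfl fun b _ => ?_
    rw [hT b a, hsym.apply b a]
    ring
  have hcross : ∑ j, ∑ l, T j l * (Γ j l * (2 * S j l))
      = 2 * ∑ j, ∑ l, T j l * (Γ j l * S j l) := by
    simp only [mul_sum]
    exact sum_congr rfl fun j _ => sum_congr rfl fun l _ => by ring
  have hdiag_two : ∑ j, ∑ l, T j j * (2 * (Γ j l * S j l))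
      = 2 * ∑ j, ∑ l, T j j * (Γ j l * S j l) := by
    simp only [mul_sum]
    exact sum_congr rfl fun j _ => sum_congr rfl fun l _ => by ring
  conv_lhs => simp only [symInner, theta_apply_self hrow hsym hS, theta_apply_eq hrow hsym,
    mul_add, mul_sub, mul_sum, sum_add_distrib, sum_sub_distrib]
  linear_combination hswap_jl + hswap_ln + hdiag_left + hdiag_right - hcross + hdiag_two

lemma symInner_secondMomentGen_comm (hrow : ∀ j, ∑ n, Γ j n = 0) (hsym : Γ.IsSymm)
    {S T : Fin N → Fin N → ℝ} (hS : ∀ j l, S j l = S l j) (hT : ∀ j l, T j l = T l j) :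
    symInner T (secondMomentGen Γ Λ S) = symInner S (secondMomentGen Γ Λ T) := by
  have hΘ := symInner_theta hrow hsym hS hT
  have hΘ' := symInner_theta hrow hsym hT hS
  have hcross : ∑ j, ∑ l, T j l * (Γ j l * S j l) = ∑ j, ∑ l, S j l * (Γ j l * T j l) :=
    sum_congr rfl fun j _ => sum_congr rfl fun l _ => by ring
  have hΨ : symInner T (Psi Λ S) = symInner S (Psi Λ T) := by
    simp only [symInner, Psi]
    congr 1
    · exact sum_congr rfl fun j _ => sum_congr rfl fun l _ => by ring
    · exact sum_congr rfl fun j _ => by ring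
  have hsub (U X Y : Fin N → Fin N → ℝ) :
      symInner U (fun j l => X j l - Y j l) = symInner U X - symInner U Y := by
    simp only [symInner, mul_sub, sum_sub_distrib]
    ring
  simp only [secondMomentGen, LinearMap.coe_mk, AddHom.coe_mk, hsub, hΘ, hΘ', hΨ, hcross]
  ring

lemma secondMomentGen_mul_self (hrow : ∀ j, ∑ n, Γ j n = 0) (hsym : Γ.IsSymm) {lam : ℝ}
    {w : Fin N → ℝ} (hw : (Γ - diagonal Λ) *ᵥ w = (-lam) • w) (j l : Fin N) :
    secondMomentGen Γ Λ (fun j l => w j * w l) j l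
      = -(2 * lam) * (w j * w l) + Γ j l * (w j - w l) ^ 2 := by
  have hΓw (j) : ∑ n, Γ j n * w n = (Λ j - lam) * w j := by
    have := congrFun hw j
    rw [sub_mulVec, Pi.sub_apply, mulVec_diagonal, Pi.smul_apply, smul_eq_mul] at this
    simp only [mulVec, dotProduct] at this
    linarith
  have h₁ : ∑ n, Γ l n * (w j * w n) = w j * ((Λ l - lam) * w l) := by
    rw [← hΓw, mul_sum]
    exact sum_congr rfl fun n _ => by ring
  have h₂ : ∑ n, Γ j n * (w n * w l) = w l * ((Λ j - lam) * w j) := by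
    rw [← hΓw, mul_sum]
    exact sum_congr rfl fun n _ => by ring
  rw [secondMomentGen_apply, theta_apply_eq hrow hsym, h₁, h₂, Psi]
  ring

end SecondMoments

section SymmetricSquare

variable {N : ℕ} {Γ : Matrix (Fin N) (Fin N) ℝ} {Λ : Fin N → ℝ}

def symArray (y : Sym2 (Fin N) → ℝ) : Fin N → Fin N → ℝ := fun j l => y s(j, l)

lemma symArray_symm (y : Sym2 (Fin N) → ℝ) (j l : Fin N) : symArray y j l = symArray y l j :=
  congrArg y Sym2.eq_swap

lemma symArray_injective : Function.Injective (symArray (N := N)) := by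
  intro y y' h
  funext z
  induction z using Sym2.ind with | _ j l => exact congrFun₂ h j l

/-- `Θ - Ψ` acting on arrays `(S_{jl})_{j ≤ l}`, indexed by unordered pairs. -/
def secondMomentOp (Γ : Matrix (Fin N) (Fin N) ℝ) (Λ : Fin N → ℝ) :
    EuclideanSpace ℝ (Sym2 (Fin N)) →ₗ[ℝ] EuclideanSpace ℝ (Sym2 (Fin N)) where
  toFun y := WithLp.toLp 2 fun z => secondMomentGen Γ Λ (symArray y.ofLp) z.inf z.sup
  map_add' y y' := by
    ext z
    simp only [WithLp.ofLp_add, PiLp.add_apply]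
    rw [show symArray (y.ofLp + y'.ofLp) = symArray y.ofLp + symArray y'.ofLp from rfl, map_add]
    rfl
  map_smul' c y := by
    ext z
    simp only [WithLp.ofLp_smul, PiLp.smul_apply, RingHom.id_apply]
    rw [show symArray (c • y.ofLp) = c • symArray y.ofLp from rfl, map_smul]
    rfl

lemma secondMomentOp_apply_mk (hrow : ∀ j, ∑ n, Γ j n = 0) (hsym : Γ.IsSymm)
    (y : EuclideanSpace ℝ (Sym2 (Fin N))) (j l : Fin N) :
    secondMomentOp Γ Λ y s(j, l) = secondMomentGen Γ Λ (symArray y.ofLp) j l :=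
  Sym2.apply_inf_sup_mk (secondMomentGen_symm hrow hsym (symArray_symm _)) j l

lemma two_mul_inner_secondMomentOp (hrow : ∀ j, ∑ n, Γ j n = 0) (hsym : Γ.IsSymm)
    (y y' : EuclideanSpace ℝ (Sym2 (Fin N))) :
    2 * ⟪secondMomentOp Γ Λ y, y'⟫ =
      symInner (symArray y'.ofLp) (secondMomentGen Γ Λ (symArray y.ofLp)) := by
  rw [EuclideanSpace.inner_eq_star_dotProduct]
  simp only [dotProduct, star_trivial]
  rw [two_mul, ← two_nsmul, ← sum_sym2_mk_add_sum_diag]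
  simp only [symInner, secondMomentOp_apply_mk hrow hsym]
  rfl

lemma secondMomentOp_isSymmetric (hrow : ∀ j, ∑ n, Γ j n = 0) (hsym : Γ.IsSymm) :
    (secondMomentOp Γ Λ).IsSymmetric := by
  intro y y'
  have h := symInner_secondMomentGen_comm (Λ := Λ) hrow hsym (symArray_symm y.ofLp)
    (symArray_symm y'.ofLp)
  rw [← two_mul_inner_secondMomentOp hrow hsym, ← two_mul_inner_secondMomentOp hrow hsym] at h
  rw [real_inner_comm _ y]
  linarith

lemma exists_eigenarray_of_hasEigenvalue (hrow : ∀ j, ∑ n, Γ j n = 0) (hsym : Γ.IsSymm)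
    {r : ℝ} (hr : HasEigenvalue (secondMomentOp Γ Λ) r) :
    ∃ S : Fin N → Fin N → ℝ, S ≠ 0 ∧ (∀ j l, S j l = S l j) ∧
      (fun j l => Theta Γ S j l - Psi Λ S j l) = fun j l => r * S j l := by
  obtain ⟨y, hy⟩ := hr.exists_hasEigenvector
  refine ⟨symArray y.ofLp, ?_, symArray_symm _, ?_⟩
  · intro h
    exact hy.2 (by simpa using congrArg (WithLp.toLp 2) (@symArray_injective N y.ofLp 0 h))
  · funext j l
    rw [← secondMomentGen_apply, ← secondMomentOp_apply_mk hrow hsym, hy.apply_eq_smul]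
    rfl

def symSquare (w : Fin N → ℝ) : EuclideanSpace ℝ (Sym2 (Fin N)) :=
  WithLp.toLp 2 (Sym2.lift ⟨fun j l => w j * w l, fun _ _ => mul_comm _ _⟩)

lemma symArray_symSquare (w : Fin N → ℝ) :
    symArray (symSquare w).ofLp = fun j l => w j * w l := rfl

lemma symSquare_ne_zero {w : Fin N → ℝ} (hw : w ≠ 0) : symSquare w ≠ 0 := by
  obtain ⟨j, hj⟩ := Function.ne_iff.1 hw
  intro h
  have : symSquare w s(j, j) = w j * w j := rfl
  rw [h, PiLp.zero_apply, eq_comm, mul_self_eq_zero] at this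
  exact hj this

lemma le_inner_secondMomentOp_symSquare (hrow : ∀ j, ∑ n, Γ j n = 0) (hsym : Γ.IsSymm)
    (hoff : ∀ j l, j ≠ l → 0 ≤ Γ j l) {lam : ℝ} {w : Fin N → ℝ} (hw0 : 0 ≤ w)
    (hw : (Γ - diagonal Λ) *ᵥ w = (-lam) • w) :
    -(2 * lam) * ⟪symSquare w, symSquare w⟫ ≤
      ⟪secondMomentOp Γ Λ (symSquare w), symSquare w⟫ := by
  simp only [EuclideanSpace.inner_eq_star_dotProduct, dotProduct, star_trivial, mul_sum]
  refine sum_le_sum fun z _ => ?_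
  induction z using Sym2.ind with | _ j l => ?_
  rw [secondMomentOp_apply_mk hrow hsym, symArray_symSquare,
    secondMomentGen_mul_self hrow hsym hw]
  have hΓ : 0 ≤ Γ j l * (w j - w l) ^ 2 := by
    rcases eq_or_ne j l with rfl | hjl
    · simp
    · exact mul_nonneg (hoff j l hjl) (sq_nonneg _)
  change -(2 * lam) * (w j * w l * (w j * w l)) ≤ w j * w l * _
  nlinarith [mul_nonneg (mul_nonneg (hw0 j) (hw0 l)) hΓ]

end SymmetricSquare

theorem stmt9_general {N : ℕ} (Γ : Matrix (Fin N) (Fin N) ℝ)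
    (hsym : Γ.IsSymm)
    (hoff : ∀ j l : Fin N, j ≠ l → 0 ≤ Γ j l)
    (hrow : ∀ j : Fin N, Γ j j = -∑ l ∈ Finset.univ.erase j, Γ j l)
    (Λ : Fin N → ℝ)
    (lam : ℝ)
    (hlam_eig : ∃ v : Fin N → ℝ, v ≠ 0 ∧
      (Γ - Matrix.diagonal Λ).mulVec v = (-lam) • v)
    (hlam_top : ∀ μ' : ℝ,
      (∃ v : Fin N → ℝ, v ≠ 0 ∧ (Γ - Matrix.diagonal Λ).mulVec v = μ' • v) →
      μ' ≤ -lam)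
    (mu : ℝ)
    (hmu_top : ∀ μ' : ℝ,
      (∃ S : Fin N → Fin N → ℝ, S ≠ 0 ∧ (∀ j l, S j l = S l j) ∧
        (fun j l => Theta Γ S j l - Psi Λ S j l) = fun j l => μ' * S j l) →
      μ' ≤ -mu) :
    mu ≤ 2 * lam := by
  have hrow₀ (j : Fin N) : ∑ n, Γ j n = 0 := by
    rw [← sum_erase_add _ _ (mem_univ j), hrow j, add_neg_cancel]
  obtain ⟨v, hv₀, hv⟩ := hlam_eig
  have hw : (Γ - diagonal Λ) *ᵥ |v| = (-lam) • |v| :=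
    (hsym.sub (isSymm_diagonal Λ)).mulVec_abs_eq_smul
      (fun j l hjl => by simpa [hjl] using hoff j l hjl)
      (fun μ u hu h => hlam_top μ ⟨u, hu, h⟩) hv
  set x := symSquare |v|
  have hx : 0 < ⟪x, x⟫ := real_inner_self_pos.2 (symSquare_ne_zero (by simpa using hv₀))
  have hlow := le_inner_secondMomentOp_symSquare hrow₀ hsym hoff (abs_nonneg v) hw
  have hup := (secondMomentOp_isSymmetric hrow₀ hsym).inner_apply_self_le
    (fun r hr => hmu_top r (exists_eigenarray_of_hasEigenvalue hrow₀ hsym hr)) x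
  linarith [le_of_mul_le_mul_right (hlow.trans hup) hx]

/-- if `-λ` is the largest eigenvalue of `A = Γ - Φ` and `-μ` is
the largest eigenvalue of `Θ - Ψ` (acting on symmetric arrays), then `μ ≤ 2λ`. -/
theorem stmt9 {N : ℕ} (hN : 1 ≤ N) (Γ : Matrix (Fin N) (Fin N) ℝ)
    (hsym : Γ.IsSymm)
    (hoff : ∀ j l : Fin N, j ≠ l → 0 ≤ Γ j l)
    (hrow : ∀ j : Fin N, Γ j j = -∑ l ∈ Finset.univ.erase j, Γ j l)
    (hirr : ∀ j l : Fin N, Relation.ReflTransGen (fun a b => 0 < Γ a b) j l)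
    (Λ : Fin N → ℝ) (hΛ : ∀ j, 0 ≤ Λ j)
    (lam : ℝ)
    (hlam_eig : ∃ v : Fin N → ℝ, v ≠ 0 ∧
      (Γ - Matrix.diagonal Λ).mulVec v = (-lam) • v)
    (hlam_top : ∀ μ' : ℝ,
      (∃ v : Fin N → ℝ, v ≠ 0 ∧ (Γ - Matrix.diagonal Λ).mulVec v = μ' • v) →
      μ' ≤ -lam)
    (mu : ℝ)
    (hmu_eig : ∃ S : Fin N → Fin N → ℝ, S ≠ 0 ∧ (∀ j l, S j l = S l j) ∧
      (fun j l => Theta Γ S j l - Psi Λ S j l) = fun j l => (-mu) * S j l)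
    (hmu_top : ∀ μ' : ℝ,
      (∃ S : Fin N → Fin N → ℝ, S ≠ 0 ∧ (∀ j l, S j l = S l j) ∧
        (fun j l => Theta Γ S j l - Psi Λ S j l) = fun j l => μ' * S j l) →
      μ' ≤ -mu) :
    mu ≤ 2 * lam :=
  stmt9_general Γ hsym hoff hrow Λ lam hlam_eig hlam_top mu hmu_top
end

section
/- In the weak-coupling regime Γ_{jl} = θΓ^{(1)}_{jl} with dissipation coefficients having a unique minimum at j⋆, the growth-rate difference satisfies μ - 2λ = -2θ² ∑_{j ≠ j⋆} (Γ^{(1)}_{j j⋆})²/(Λ_j - Λ_{j⋆}) + O(θ³); hence if Γ^{(1)} is irreducible then μ - 2λ < 0 for small θ. -/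
open Matrix Finset

theorem exists_pos_add_le_of_forall_lt {α : Type*} [Fintype α] [DecidableEq α] (f : α → ℝ)
    (a : α) (h : ∀ b ≠ a, f a < f b) : ∃ g > 0, ∀ b ≠ a, f a + g ≤ f b := by
  rcases (univ.erase a).eq_empty_or_nonempty with he | hne
  · exact ⟨1, one_pos, fun b hb => absurd (mem_erase.mpr ⟨hb, mem_univ b⟩) (he ▸ notMem_empty b)⟩
  · obtain ⟨m, hm, hmin⟩ := exists_min_image _ f hne
    exact ⟨f m - f a, sub_pos.mpr (h m (ne_of_mem_erase hm)),
      fun b hb => by linarith [hmin b (mem_erase.mpr ⟨hb, mem_univ b⟩)]⟩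

theorem eventually_abs_mul_le (K : ℝ) {c : ℝ} (hc : 0 < c) :
    ∀ᶠ θ in nhds (0 : ℝ), |θ| * K ≤ c := by
  have : Filter.Tendsto (fun θ : ℝ => |θ| * K) (nhds 0) (nhds 0) := by
    simpa using (continuous_abs.mul continuous_const).tendsto (0 : ℝ) (f := fun θ : ℝ => |θ| * K)
  exact this.eventually (ge_mem_nhds hc)

theorem exists_pos_forall_lt_zero_of_isBigO {f : ℝ → ℝ} {c : ℝ} (hc : 0 < c)
    (h : (fun x => f x + c * x ^ 2) =O[nhds 0] fun x => x ^ 3) :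
    ∃ x₀ > 0, ∀ x, 0 < x → x < x₀ → f x < 0 := by
  have ho : (fun x => f x + c * x ^ 2) =o[nhds 0] fun x => x ^ 2 :=
    h.trans_isLittleO (Asymptotics.isLittleO_pow_pow (by norm_num))
  obtain ⟨ε, hε, hball⟩ := Metric.eventually_nhds_iff.mp (ho.bound (half_pos hc))
  refine ⟨ε, hε, fun x hx hxε => ?_⟩
  have hx' := hball (y := x) (by simpa [abs_of_pos hx] using hxε)
  rw [Real.norm_eq_abs, Real.norm_eq_abs, abs_of_pos (by positivity : 0 < x ^ 2)] at hx'
  nlinarith [le_abs_self (f x + c * x ^ 2), pow_pos hx 2]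

section Perturbation

variable {ι : Type*} [Fintype ι] {D : ι → ℝ} {C : Matrix ι ι ℝ} {i₀ : ι} {g K θ ν : ℝ}
  {v : ι → ℝ}

theorem abs_sum_mul_le (hK : ∀ i, ∑ j, |C i j| ≤ K) (i : ι) {s : Finset ι} {u : ι → ℝ} {M : ℝ}
    (hM : 0 ≤ M) (hu : ∀ j ∈ s, |u j| ≤ M) : |∑ j ∈ s, C i j * u j| ≤ K * M :=
  calc |∑ j ∈ s, C i j * u j| ≤ ∑ j ∈ s, |C i j| * M := by
        refine (abs_sum_le_sum_abs _ _).trans (sum_le_sum fun j hj => ?_)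
        rw [abs_mul]
        exact mul_le_mul_of_nonneg_left (hu j hj) (abs_nonneg _)
    _ = (∑ j ∈ s, |C i j|) * M := (sum_mul _ _ _).symm
    _ ≤ K * M := by
        gcongr
        exact (sum_le_sum_of_subset_of_nonneg (subset_univ s) fun _ _ _ => abs_nonneg _).trans
          (hK i)

theorem abs_mulVec_apply_le (hK : ∀ i, ∑ j, |C i j| ≤ K) (i : ι) {u : ι → ℝ} {M : ℝ}
    (hM : 0 ≤ M) (hu : ∀ j, |u j| ≤ M) : |(C *ᵥ u) i| ≤ K * M :=
  abs_sum_mul_le hK i hM fun j _ => hu j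

theorem abs_apply_le_of_sum_abs_le (hK : ∀ i, ∑ j, |C i j| ≤ K) (i j : ι) : |C i j| ≤ K := by
  simpa using abs_sum_mul_le hK i (s := {j}) (u := 1) zero_le_one (by simp)

theorem sum_abs_apply_le_sum_sum_abs (A : Matrix ι ι ℝ) (i : ι) :
    ∑ j, |A i j| ≤ ∑ i, ∑ j, |A i j| :=
  single_le_sum (fun i _ => sum_nonneg fun j _ => abs_nonneg (A i j)) (mem_univ i)

variable [DecidableEq ι]

theorem det_mul_prod_diag_pos_of_sum_row_lt_diag (A : Matrix ι ι ℝ)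
    (h : ∀ i, ∑ j ∈ univ.erase i, |A i j| < |A i i|) : 0 < A.det * ∏ i, A i i := by
  set A₀ := diagonal fun i => A i i
  -- the segment from `A₀` to `A` stays strictly diagonally dominant, so its determinant
  -- never vanishes and keeps the sign it has at `A₀`
  let M : ℝ → Matrix ι ι ℝ := fun s => A₀ + s • (A - A₀)
  have hM : ∀ s ∈ Set.Icc (0 : ℝ) 1, (M s).det ≠ 0 := fun s hs => by
    refine det_ne_zero_of_sum_row_lt_diag fun i => ?_
    have hoff : ∀ j ∈ univ.erase i, ‖M s i j‖ ≤ |A i j| := fun j hj => by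
      simp [M, A₀, diagonal_apply_ne _ (ne_of_mem_erase hj).symm, abs_of_nonneg hs.1,
        mul_le_of_le_one_left (abs_nonneg _) hs.2]
    calc ∑ j ∈ univ.erase i, ‖M s i j‖ ≤ ∑ j ∈ univ.erase i, |A i j| := sum_le_sum hoff
      _ < ‖M s i i‖ := by simpa [M, A₀] using h i
  have hA₀ : A₀.det ≠ 0 := by simpa [M] using hM 0 ⟨le_rfl, zero_le_one⟩
  have hcont : Continuous fun s => (M s).det * A₀.det := by
    unfold M; fun_prop
  have h₁ : 0 < (M 1).det * A₀.det := by
    by_contra! hneg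
    obtain ⟨c, hc, hc0⟩ := intermediate_value_Icc' zero_le_one hcont.continuousOn
      ⟨hneg, by simpa [M] using (mul_self_pos.mpr hA₀).le⟩
    exact mul_ne_zero (hM c hc) hA₀ hc0
  simpa [M, A₀, det_diagonal] using h₁

theorem det_mul_prod_pos_of_lt_abs (hK : ∀ i, ∑ j, |C i j| ≤ K) (d : ι → ℝ)
    (hd : ∀ i, |θ| * K < |d i|) :
    0 < (diagonal d - θ • C).det * ∏ i, (d i - θ * C i i) := by
  have hdiag : ∀ i, (diagonal d - θ • C) i i = d i - θ * C i i := by simp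
  simp_rw [← hdiag]
  refine det_mul_prod_diag_pos_of_sum_row_lt_diag _ fun i => ?_
  have hoff : ∑ j ∈ univ.erase i, |(diagonal d - θ • C) i j|
      = |θ| * (∑ j, |C i j| - |C i i|) := by
    rw [← sum_erase_eq_sub (mem_univ i), mul_sum]
    refine sum_congr rfl fun j hj => ?_
    simp [diagonal_apply_ne _ (ne_of_mem_erase hj).symm, abs_mul]
  rw [hoff, hdiag]
  calc |θ| * (∑ j, |C i j| - |C i i|) ≤ |θ| * K - |θ * C i i| := by
        rw [abs_mul]; nlinarith [hK i, abs_nonneg θ]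
    _ < |d i| - |θ * C i i| := by linarith [hd i]
    _ ≤ |d i - θ * C i i| := abs_sub_abs_le_abs_sub _ _

theorem eigenvalue_sub_mul_apply (heig : (diagonal D + θ • C) *ᵥ v = ν • v) (i : ι) :
    (ν - D i) * v i = θ * (C *ᵥ v) i := by
  have := congrFun heig i
  simp only [add_mulVec, smul_mulVec, mulVec_diagonal, Pi.add_apply, Pi.smul_apply,
    smul_eq_mul] at this
  linarith

theorem exists_eigenvalue_ge (hK : ∀ i, ∑ j, |C i j| ≤ K) (hg : 0 < g)
    (hgap : ∀ i ≠ i₀, D i + g ≤ D i₀) (hθ : |θ| * K ≤ g / 8) :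
    ∃ ν, D i₀ - g / 2 ≤ ν ∧ ∃ v ≠ 0, (diagonal D + θ • C) *ᵥ v = ν • v := by
  let f : ℝ → ℝ := fun x => (diagonal (fun i => x - D i) - θ • C).det
  have hf : Continuous f := by fun_prop
  have hθC : ∀ i, |θ * C i i| ≤ g / 8 := fun i => by
    rw [abs_mul]
    exact (mul_le_mul_of_nonneg_left (abs_apply_le_of_sum_abs_le hK i i) (abs_nonneg θ)).trans hθ
  have hgap' : ∀ i ≠ i₀, 3 * g / 8 ≤ D i₀ - g / 2 - D i - θ * C i i := fun i hi => by
    linarith [hgap i hi, (abs_le.mp (hθC i)).2]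
  have hDle : ∀ i, D i ≤ D i₀ := fun i => by
    rcases eq_or_ne i i₀ with rfl | hi
    exacts [le_rfl, by linarith [hgap i hi]]
  have hlo : f (D i₀ - g / 2) < 0 := by
    have hpos := det_mul_prod_pos_of_lt_abs (θ := θ) hK (fun i => D i₀ - g / 2 - D i)
      fun i => by
        rcases eq_or_ne i i₀ with rfl | hi
        · linarith [neg_le_abs (D i - g / 2 - D i)]
        · linarith [hgap i hi, le_abs_self (D i₀ - g / 2 - D i)]
    refine neg_of_mul_pos_left hpos ?_
    rw [← mul_prod_erase _ _ (mem_univ i₀)]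
    refine (mul_neg_of_neg_of_pos (by linarith [(abs_le.mp (hθC i₀)).1]) ?_).le
    exact prod_pos fun i hi => by linarith [hgap' i (ne_of_mem_erase hi)]
  have hhi : 0 < f (D i₀ + g) := by
    have hpos := det_mul_prod_pos_of_lt_abs (θ := θ) hK (fun i => D i₀ + g - D i)
      fun i => by linarith [hDle i, le_abs_self (D i₀ + g - D i)]
    refine pos_of_mul_pos_left hpos (prod_nonneg fun i _ => ?_)
    linarith [hDle i, (abs_le.mp (hθC i)).2]
  obtain ⟨c, hc, hfc⟩ := intermediate_value_Icc (by linarith) hf.continuousOn ⟨hlo.le, hhi.le⟩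
  obtain ⟨v, hv, hker⟩ := exists_mulVec_eq_zero_iff.mpr hfc
  refine ⟨c, hc.1, v, hv, funext fun i => ?_⟩
  have := congrFun hker i
  simp only [sub_mulVec, add_mulVec, smul_mulVec, mulVec_diagonal, Pi.sub_apply, Pi.add_apply,
    Pi.smul_apply, smul_eq_mul, Pi.zero_apply] at this ⊢
  linarith

theorem half_gap_mul_abs_le (hg : 0 ≤ g) (hgap : ∀ i ≠ i₀, D i + g ≤ D i₀)
    (hν : D i₀ - g / 2 ≤ ν) (heig : (diagonal D + θ • C) *ᵥ v = ν • v) {i : ι} (hi : i ≠ i₀) :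
    g / 2 * |v i| ≤ |θ| * |(C *ᵥ v) i| :=
  calc g / 2 * |v i| ≤ (ν - D i) * |v i| := by gcongr; linarith [hgap i hi]
    _ = |(ν - D i) * v i| := by
        rw [abs_mul, abs_of_nonneg (by linarith [hgap i hi] : 0 ≤ ν - D i)]
    _ = |θ| * |(C *ᵥ v) i| := by rw [eigenvalue_sub_mul_apply heig, abs_mul]

theorem abs_le_abs_apply_of_eigenvalue_ge (hK : ∀ i, ∑ j, |C i j| ≤ K) (hg : 0 ≤ g)
    (hgap : ∀ i ≠ i₀, D i + g ≤ D i₀) (hθ : |θ| * K < g / 2) (hν : D i₀ - g / 2 ≤ ν)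
    (heig : (diagonal D + θ • C) *ᵥ v = ν • v) (j : ι) : |v j| ≤ |v i₀| := by
  have : Nonempty ι := ⟨j⟩
  obtain ⟨i, hi⟩ := Finite.exists_max fun j => |v j|
  rcases eq_or_ne i i₀ with rfl | hne
  · exact hi j
  have hCv := abs_mulVec_apply_le hK i (abs_nonneg _) hi
  have := half_gap_mul_abs_le hg hgap hν heig hne
  have hvi : |v i| ≤ 0 := by nlinarith [abs_nonneg θ, abs_nonneg (v i)]
  exact (hi j).trans (hvi.trans (abs_nonneg _))

theorem apply_ne_zero_of_eigenvalue_ge (hK : ∀ i, ∑ j, |C i j| ≤ K) (hg : 0 ≤ g)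
    (hgap : ∀ i ≠ i₀, D i + g ≤ D i₀) (hθ : |θ| * K < g / 2) (hν : D i₀ - g / 2 ≤ ν)
    (heig : (diagonal D + θ • C) *ᵥ v = ν • v) (hv : v ≠ 0) : v i₀ ≠ 0 := by
  intro h₀
  refine hv (funext fun j => abs_nonpos_iff.mp ?_)
  simpa [h₀] using abs_le_abs_apply_of_eigenvalue_ge hK hg hgap hθ hν heig j

theorem mulVec_apply_eq_add_sum_erase (hv₀ : v i₀ = 1) (i : ι) :
    (C *ᵥ v) i = C i i₀ + ∑ k ∈ univ.erase i₀, C i k * v k := by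
  rw [mulVec, dotProduct, ← add_sum_erase _ _ (mem_univ i₀), hv₀, mul_one]

theorem abs_eigenvalue_sub_le_of_normalized (hK : ∀ i, ∑ j, |C i j| ≤ K)
    (heig : (diagonal D + θ • C) *ᵥ v = ν • v) (hv₀ : v i₀ = 1) (hv : ∀ j, |v j| ≤ 1) :
    |ν - D i₀| ≤ |θ| * K := by
  rw [← mul_one (ν - D i₀), ← hv₀, eigenvalue_sub_mul_apply heig, abs_mul]
  simpa using mul_le_mul_of_nonneg_left (abs_mulVec_apply_le hK i₀ zero_le_one hv) (abs_nonneg θ)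

theorem abs_apply_le_of_normalized (hK : ∀ i, ∑ j, |C i j| ≤ K) (hg : 0 < g)
    (hgap : ∀ i ≠ i₀, D i + g ≤ D i₀) (hν : D i₀ - g / 2 ≤ ν)
    (heig : (diagonal D + θ • C) *ᵥ v = ν • v) (hv : ∀ j, |v j| ≤ 1) {i : ι} (hi : i ≠ i₀) :
    |v i| ≤ 2 * K * |θ| / g := by
  rw [le_div_iff₀ hg]
  nlinarith [half_gap_mul_abs_le hg.le hgap hν heig hi, abs_mulVec_apply_le hK i zero_le_one hv,
    abs_nonneg θ]

theorem abs_apply_sub_first_order_le_of_normalized (hK : ∀ i, ∑ j, |C i j| ≤ K) (hg : 0 < g)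
    (hgap : ∀ i ≠ i₀, D i + g ≤ D i₀) (hν : D i₀ - g / 2 ≤ ν)
    (heig : (diagonal D + θ • C) *ᵥ v = ν • v) (hv₀ : v i₀ = 1) (hv : ∀ j, |v j| ≤ 1) {i : ι}
    (hi : i ≠ i₀) : |v i - θ * C i i₀ / (D i₀ - D i)| ≤ 6 * K ^ 2 * θ ^ 2 / g ^ 2 := by
  have he : g / 2 ≤ ν - D i := by linarith [hgap i hi]
  have hδ : g ≤ D i₀ - D i := by linarith [hgap i hi]
  have hK0 : 0 ≤ K := (abs_nonneg _).trans (abs_apply_le_of_sum_abs_le hK i i)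
  set r := ∑ k ∈ univ.erase i₀, C i k * v k
  have hr : |r| ≤ K * (2 * K * |θ| / g) := abs_sum_mul_le hK i (by positivity)
    fun k hk => abs_apply_le_of_normalized hK hg hgap hν heig hv (ne_of_mem_erase hk)
  have hrow := eigenvalue_sub_mul_apply heig i
  rw [mulVec_apply_eq_add_sum_erase hv₀] at hrow
  have key : v i - θ * C i i₀ / (D i₀ - D i)
      = (θ * C i i₀ * (D i₀ - ν) / (D i₀ - D i) + θ * r) / (ν - D i) := by
    field_simp [(by linarith : ν - D i ≠ 0), (by linarith : D i₀ - D i ≠ 0)]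
    linear_combination (D i₀ - D i) * hrow
  rw [key, abs_div, abs_of_pos (a := ν - D i) (by linarith), div_le_iff₀ (by linarith)]
  calc |θ * C i i₀ * (D i₀ - ν) / (D i₀ - D i) + θ * r|
      ≤ |θ| * K * (|θ| * K) / g + |θ| * (K * (2 * K * |θ| / g)) := by
        refine (abs_add_le _ _).trans (add_le_add ?_ ?_)
        · rw [abs_div, abs_mul, abs_mul, abs_of_pos (a := D i₀ - D i) (by linarith),
            abs_sub_comm]
          gcongr
          exacts [abs_apply_le_of_sum_abs_le hK i i₀,
            abs_eigenvalue_sub_le_of_normalized hK heig hv₀ hv]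
        · rw [abs_mul]; gcongr
    _ = 6 * K ^ 2 * θ ^ 2 / g ^ 2 * (g / 2) := by
        field_simp; rw [← sq_abs θ]; ring
    _ ≤ 6 * K ^ 2 * θ ^ 2 / g ^ 2 * (ν - D i) := by gcongr

theorem abs_eigenvalue_sub_second_order_le_of_normalized (hK : ∀ i, ∑ j, |C i j| ≤ K)
    (hg : 0 < g) (hgap : ∀ i ≠ i₀, D i + g ≤ D i₀) (hν : D i₀ - g / 2 ≤ ν)
    (heig : (diagonal D + θ • C) *ᵥ v = ν • v) (hv₀ : v i₀ = 1) (hv : ∀ j, |v j| ≤ 1) :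
    |ν - (D i₀ + θ * C i₀ i₀ + θ ^ 2 * ∑ i ∈ univ.erase i₀, C i₀ i * C i i₀ / (D i₀ - D i))|
      ≤ 6 * K ^ 3 / g ^ 2 * |θ| ^ 3 := by
  have hrow := eigenvalue_sub_mul_apply heig i₀
  rw [mulVec_apply_eq_add_sum_erase hv₀, hv₀, mul_one] at hrow
  have key : ν - (D i₀ + θ * C i₀ i₀
        + θ ^ 2 * ∑ i ∈ univ.erase i₀, C i₀ i * C i i₀ / (D i₀ - D i))
      = θ * ∑ i ∈ univ.erase i₀, C i₀ i * (v i - θ * C i i₀ / (D i₀ - D i)) := by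
    have hsplit : ∑ i ∈ univ.erase i₀, C i₀ i * (v i - θ * C i i₀ / (D i₀ - D i))
        = ∑ i ∈ univ.erase i₀, C i₀ i * v i
          - θ * ∑ i ∈ univ.erase i₀, C i₀ i * C i i₀ / (D i₀ - D i) := by
      rw [mul_sum, ← sum_sub_distrib]
      exact sum_congr rfl fun i _ => by ring
    rw [hsplit]
    linear_combination hrow
  have hK0 : 0 ≤ K := (abs_nonneg _).trans (abs_apply_le_of_sum_abs_le hK i₀ i₀)
  rw [key, abs_mul]
  calc |θ| * |∑ i ∈ univ.erase i₀, C i₀ i * (v i - θ * C i i₀ / (D i₀ - D i))|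
      ≤ |θ| * (K * (6 * K ^ 2 * θ ^ 2 / g ^ 2)) := by
        gcongr
        exact abs_sum_mul_le hK i₀ (by positivity) fun i hi =>
          abs_apply_sub_first_order_le_of_normalized hK hg hgap hν heig hv₀ hv (ne_of_mem_erase hi)
    _ = 6 * K ^ 3 / g ^ 2 * |θ| ^ 3 := by
        rw [← sq_abs θ]; ring

theorem abs_eigenvalue_sub_second_order_le (hK : ∀ i, ∑ j, |C i j| ≤ K) (hg : 0 < g)
    (hgap : ∀ i ≠ i₀, D i + g ≤ D i₀) (hθ : |θ| * K < g / 2) (hν : D i₀ - g / 2 ≤ ν)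
    (heig : (diagonal D + θ • C) *ᵥ v = ν • v) (hv : v ≠ 0) :
    |ν - (D i₀ + θ * C i₀ i₀ + θ ^ 2 * ∑ i ∈ univ.erase i₀, C i₀ i * C i i₀ / (D i₀ - D i))|
      ≤ 6 * K ^ 3 / g ^ 2 * |θ| ^ 3 := by
  have hv₀ := apply_ne_zero_of_eigenvalue_ge hK hg.le hgap hθ hν heig hv
  refine abs_eigenvalue_sub_second_order_le_of_normalized (v := (v i₀)⁻¹ • v) hK hg hgap hν
    (by rw [mulVec_smul, heig, smul_comm]) (by simp [hv₀]) fun j => ?_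
  rw [Pi.smul_apply, smul_eq_mul, abs_mul, abs_inv, inv_mul_le_one₀ (abs_pos.mpr hv₀)]
  exact abs_le_abs_apply_of_eigenvalue_ge hK hg.le hgap hθ hν heig j

theorem abs_top_eigenvalue_sub_second_order_le (hK : ∀ i, ∑ j, |C i j| ≤ K) (hg : 0 < g)
    (hgap : ∀ i ≠ i₀, D i + g ≤ D i₀) (hθ : |θ| * K ≤ g / 8)
    (heig : (diagonal D + θ • C) *ᵥ v = ν • v) (hv : v ≠ 0)
    (htop : ∀ ν', (∃ u ≠ 0, (diagonal D + θ • C) *ᵥ u = ν' • u) → ν' ≤ ν) :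
    |ν - (D i₀ + θ * C i₀ i₀ + θ ^ 2 * ∑ i ∈ univ.erase i₀, C i₀ i * C i i₀ / (D i₀ - D i))|
      ≤ 6 * K ^ 3 / g ^ 2 * |θ| ^ 3 := by
  obtain ⟨ν', hν', u, hu, heigu⟩ := exists_eigenvalue_ge hK hg hgap hθ
  exact abs_eigenvalue_sub_second_order_le hK hg hgap (by linarith)
    (hν'.trans (htop ν' ⟨u, hu, heigu⟩)) heig hv

end Perturbation

theorem neg_lam_expansion {N : ℕ} (Γ : Matrix (Fin N) (Fin N) ℝ) (hΓ : Γ.IsSymm)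
    (Λ : Fin N → ℝ) (jstar : Fin N) {g K θ lam : ℝ} (hK : ∀ i, ∑ j, |Γ i j| ≤ K) (hg : 0 < g)
    (hgap : ∀ j ≠ jstar, Λ jstar + g ≤ Λ j) (hθ : |θ| * K ≤ g / 8)
    (hlam_eig : ∃ v : Fin N → ℝ, v ≠ 0 ∧ (θ • Γ - diagonal Λ) *ᵥ v = (-lam) • v)
    (hlam_top : ∀ μ' : ℝ,
      (∃ v : Fin N → ℝ, v ≠ 0 ∧ (θ • Γ - diagonal Λ) *ᵥ v = μ' • v) → μ' ≤ -lam) :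
    |-lam - (-Λ jstar + θ * Γ jstar jstar
        + θ ^ 2 * ∑ j ∈ univ.erase jstar, Γ j jstar ^ 2 / (Λ j - Λ jstar))|
      ≤ 6 * K ^ 3 / g ^ 2 * |θ| ^ 3 := by
  have hmat : θ • Γ - diagonal Λ = diagonal (-Λ) + θ • Γ := by
    rw [sub_eq_neg_add, diagonal_neg]; rfl
  obtain ⟨v, hv, heig⟩ := hlam_eig
  rw [hmat] at heig hlam_top
  have := abs_top_eigenvalue_sub_second_order_le hK hg
    (fun j hj => by simp only [Pi.neg_apply]; linarith [hgap j hj]) hθ heig hv hlam_top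
  have hsum : ∑ i ∈ univ.erase jstar, Γ jstar i * Γ i jstar / ((-Λ) jstar - (-Λ) i)
      = ∑ j ∈ univ.erase jstar, Γ j jstar ^ 2 / (Λ j - Λ jstar) :=
    sum_congr rfl fun j _ => by rw [hΓ.apply, Pi.neg_apply, Pi.neg_apply, neg_sub_neg, sq]
  rwa [hsum] at this

section SecondMoment

variable {N : ℕ}

theorem Theta_add (Γ : Matrix (Fin N) (Fin N) ℝ) (S T : Fin N → Fin N → ℝ) (j l : Fin N) :
    Theta Γ (S + T) j l = Theta Γ S j l + Theta Γ T j l := by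
  simp only [Theta, Pi.add_apply, mul_add, mul_sub, sum_add_distrib, sum_sub_distrib]
  split_ifs <;> ring

theorem Theta_smul (Γ : Matrix (Fin N) (Fin N) ℝ) (c : ℝ) (S : Fin N → Fin N → ℝ)
    (j l : Fin N) : Theta Γ (c • S) j l = c * Theta Γ S j l := by
  simp only [Theta, Pi.smul_apply, smul_eq_mul]
  rw [mul_add, mul_sum]
  congr 1
  · split_ifs <;> ring
  · exact sum_congr rfl fun _ _ => by ring

theorem Theta_smul_left (Γ : Matrix (Fin N) (Fin N) ℝ) (c : ℝ) (S : Fin N → Fin N → ℝ)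
    (j l : Fin N) : Theta (c • Γ) S j l = c * Theta Γ S j l := by
  simp only [Theta, Matrix.smul_apply, smul_eq_mul]
  rw [mul_add, mul_sum]
  congr 1
  · split_ifs <;> ring
  · exact sum_congr rfl fun _ _ => by ring

theorem Theta_transpose (Γ : Matrix (Fin N) (Fin N) ℝ) (hΓ : Γ.IsSymm) (S : Fin N → Fin N → ℝ)
    (j l : Fin N) : Theta Γ (fun a b => S b a) j l = Theta Γ S l j := by
  simp only [Theta, ne_comm (a := j), hΓ.apply j l, erase_right_comm (a := j)]
  congr 1
  · split_ifs <;> ring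
  · exact sum_congr rfl fun _ _ => by ring

def thetaLinearMap (Γ : Matrix (Fin N) (Fin N) ℝ) :
    (Fin N × Fin N → ℝ) →ₗ[ℝ] (Fin N × Fin N → ℝ) where
  toFun u := Function.uncurry (Theta Γ (Function.curry u))
  map_add' _ _ := funext fun p => Theta_add Γ _ _ p.1 p.2
  map_smul' c _ := funext fun p => Theta_smul Γ c _ p.1 p.2

noncomputable def thetaMatrix (Γ : Matrix (Fin N) (Fin N) ℝ) :
    Matrix (Fin N × Fin N) (Fin N × Fin N) ℝ :=
  LinearMap.toMatrix' (thetaLinearMap Γ)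

theorem thetaMatrix_mulVec (Γ : Matrix (Fin N) (Fin N) ℝ) (u : Fin N × Fin N → ℝ) :
    thetaMatrix Γ *ᵥ u = Function.uncurry (Theta Γ (Function.curry u)) := by
  rw [thetaMatrix, ← toLin'_apply, toLin'_toMatrix']
  rfl

theorem thetaMatrix_apply (Γ : Matrix (Fin N) (Fin N) ℝ) (p q : Fin N × Fin N) :
    thetaMatrix Γ p q = Theta Γ (fun a b => if (a, b) = q then 1 else 0) p.1 p.2 := by
  rw [thetaMatrix, LinearMap.toMatrix'_apply]
  show Theta Γ (fun a b => (Pi.single q (1 : ℝ) : Fin N × Fin N → ℝ) (a, b)) p.1 p.2 = _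
  simp only [Pi.single_apply]

theorem Theta_apply_self (Γ : Matrix (Fin N) (Fin N) ℝ) (S : Fin N → Fin N → ℝ) (j : Fin N) :
    Theta Γ S j j = ∑ n, Γ j n * (S j n + S n j - 2 * S j j) := by
  simp only [Theta, ne_eq, not_true_eq_false, if_false, erase_idem, zero_add]
  rw [← sum_erase univ (f := fun n => Γ j n * (S j n + S n j - 2 * S j j)) (by ring)]
  exact sum_congr rfl fun _ _ => by ring

theorem thetaMatrix_apply_diag_col (Γ : Matrix (Fin N) (Fin N) ℝ)
    (hrow : ∀ j, ∑ l, Γ j l = 0) (j a b : Fin N) :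
    thetaMatrix Γ (a, b) (j, j) = if a = j ∨ b = j then 2 * Γ a b else 0 := by
  rw [thetaMatrix_apply]
  rcases eq_or_ne a b with rfl | hab
  · rcases eq_or_ne a j with rfl | ha
    · simp [Theta_apply_self, mul_add, mul_sub, sum_add_distrib, sum_sub_distrib,
        ← sum_mul, hrow]
      ring
    · simp [Theta_apply_self, ha]
  · have hjj : ¬(a = j ∧ b = j) := fun h => hab (h.1.trans h.2.symm)
    simp only [Theta, if_pos hab, Prod.mk.injEq, if_neg hjj]
    rw [sum_eq_zero fun n hn => ?_]
    · split_ifs <;> grind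
    · simp only [mem_erase] at hn
      split_ifs <;> grind

theorem thetaMatrix_apply_diag_row (Γ : Matrix (Fin N) (Fin N) ℝ) (j a b : Fin N)
    (hab : (a, b) ≠ (j, j)) :
    thetaMatrix Γ (j, j) (a, b) = (if a = j then Γ j b else 0) + (if b = j then Γ j a else 0) := by
  rw [thetaMatrix_apply, Theta_apply_self]
  rcases eq_or_ne a j with rfl | ha
  · have hb : b ≠ a := fun h => hab (by rw [h])
    simp [hb, hb.symm]
  · simp [ha, ha.symm, ite_and, eq_comm]

theorem sum_erase_thetaMatrix_mul_div (Γ : Matrix (Fin N) (Fin N) ℝ) (hΓ : Γ.IsSymm)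
    (hrow : ∀ j, ∑ l, Γ j l = 0) (Λ : Fin N → ℝ) (j : Fin N) :
    ∑ q ∈ univ.erase (j, j), thetaMatrix Γ (j, j) q * thetaMatrix Γ q (j, j)
        / (-(Λ j + Λ j) - -(Λ q.1 + Λ q.2))
      = 4 * ∑ i ∈ univ.erase j, Γ i j ^ 2 / (Λ i - Λ j) := by
  set f : Fin N → ℝ := fun i => Γ i j ^ 2 / (Λ i - Λ j)
  -- the excluded terms vanish anyway, through the junk value `x / 0 = 0`
  have hf : f j = 0 := by simp [f]
  have hterm : ∀ q ∈ univ.erase (j, j), thetaMatrix Γ (j, j) q * thetaMatrix Γ q (j, j)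
      / (-(Λ j + Λ j) - -(Λ q.1 + Λ q.2))
      = 2 * ((if q.1 = j then f q.2 else 0) + (if q.2 = j then f q.1 else 0)) := by
    rintro ⟨a, b⟩ hq
    rw [thetaMatrix_apply_diag_row Γ j a b (ne_of_mem_erase hq), thetaMatrix_apply_diag_col Γ hrow]
    rcases eq_or_ne a j with rfl | ha
    · have hb : b ≠ a := fun h => ne_of_mem_erase hq (by rw [h])
      simp [f, hb, hΓ.apply a b]
      ring_nf
    · rcases eq_or_ne b j with rfl | hb
      · simp [f, ha, hΓ.apply a b]
        ring_nf
      · simp [ha, hb]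
  rw [sum_congr rfl hterm, ← mul_sum, sum_erase _ (by simp [hf]), Fintype.sum_prod_type]
  simp only [sum_add_distrib, sum_ite_irrel, sum_const_zero, sum_ite_eq', mem_univ, if_true,
    sum_erase _ hf]
  ring

theorem pairMatrix_mulVec_eq_smul_iff (Γ : Matrix (Fin N) (Fin N) ℝ) (Λ : Fin N → ℝ)
    (θ ν : ℝ) (u : Fin N × Fin N → ℝ) :
    (diagonal (fun p : Fin N × Fin N => -(Λ p.1 + Λ p.2)) + θ • thetaMatrix Γ) *ᵥ u = ν • u ↔
      (fun j l => Theta (θ • Γ) (Function.curry u) j l - Psi Λ (Function.curry u) j l)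
        = fun j l => ν • Function.curry u j l := by
  rw [add_mulVec, smul_mulVec, thetaMatrix_mulVec]
  simp only [funext_iff, Prod.forall, Pi.add_apply, Pi.smul_apply, smul_eq_mul, mulVec_diagonal,
    Function.uncurry_apply_pair, Function.curry_apply, Theta_smul_left, Psi]
  refine forall₂_congr fun j l => ?_
  constructor <;> intro h <;> linarith

theorem Theta_sub_Psi_symmetrize (Γ : Matrix (Fin N) (Fin N) ℝ) (hΓ : Γ.IsSymm)
    (Λ : Fin N → ℝ) (ν : ℝ) (S : Fin N → Fin N → ℝ)
    (h : (fun j l => Theta Γ S j l - Psi Λ S j l) = fun j l => ν • S j l) :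
    (fun j l => Theta Γ (fun a b => S a b + S b a) j l - Psi Λ (fun a b => S a b + S b a) j l)
      = fun j l => ν • (S j l + S l j) := by
  funext j l
  have hjl := congrFun₂ h j l
  have hlj := congrFun₂ h l j
  simp only [Psi, smul_eq_mul] at hjl hlj ⊢
  rw [show (fun a b => S a b + S b a) = S + fun a b => S b a from rfl, Theta_add,
    Theta_transpose Γ hΓ S j l]
  linarith

theorem neg_mu_expansion (Γ : Matrix (Fin N) (Fin N) ℝ) (hΓ : Γ.IsSymm)
    (hrow : ∀ j, ∑ l, Γ j l = 0) (Λ : Fin N → ℝ) (jstar : Fin N) {g K θ mu : ℝ}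
    (hK : ∀ p, ∑ q, |thetaMatrix Γ p q| ≤ K) (hg : 0 < g)
    (hgap : ∀ j ≠ jstar, Λ jstar + g ≤ Λ j) (hθ : |θ| * K ≤ g / 8)
    (hmu_eig : ∃ S : Fin N → Fin N → ℝ, S ≠ 0 ∧ (∀ j l, S j l = S l j) ∧
      (fun j l => Theta (θ • Γ) S j l - Psi Λ S j l) = fun j l => (-mu) • S j l)
    (hmu_top : ∀ μ' : ℝ, (∃ S : Fin N → Fin N → ℝ, S ≠ 0 ∧ (∀ j l, S j l = S l j) ∧
      (fun j l => Theta (θ • Γ) S j l - Psi Λ S j l) = fun j l => μ' • S j l) → μ' ≤ -mu) :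
    |-mu - (-(Λ jstar + Λ jstar) + θ * (2 * Γ jstar jstar)
        + θ ^ 2 * (4 * ∑ j ∈ univ.erase jstar, Γ j jstar ^ 2 / (Λ j - Λ jstar)))|
      ≤ 6 * K ^ 3 / g ^ 2 * |θ| ^ 3 := by
  set D : Fin N × Fin N → ℝ := fun p => -(Λ p.1 + Λ p.2)
  have hΛ : ∀ j, Λ jstar ≤ Λ j := fun j => by
    rcases eq_or_ne j jstar with rfl | hj
    exacts [le_rfl, by linarith [hgap j hj]]
  have hgap₂ : ∀ q ≠ (jstar, jstar), D q + g ≤ D (jstar, jstar) := by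
    rintro ⟨a, b⟩ hq
    rcases eq_or_ne a jstar with rfl | ha
    · linarith [hgap b fun hb => hq (by rw [hb])]
    · linarith [hgap a ha, hΛ b]
  obtain ⟨ν, hν, v, hv, heig⟩ := exists_eigenvalue_ge hK hg hgap₂ hθ
  have hv₀ := apply_ne_zero_of_eigenvalue_ge hK hg.le hgap₂ (by linarith) hν heig hv
  -- the top eigenvector of the pair operator need not be symmetric; its symmetrisation is,
  -- and stays nonzero at `(jstar, jstar)`
  have hle : ν ≤ -mu := by
    refine hmu_top ν ⟨fun a b => v (a, b) + v (b, a), fun h => hv₀ ?_, fun a b => add_comm _ _,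
      Theta_sub_Psi_symmetrize _ (hΓ.smul θ) Λ ν _ ((pairMatrix_mulVec_eq_smul_iff ..).mp heig)⟩
    have := congrFun₂ h jstar jstar
    simp only [Pi.zero_apply] at this
    linarith
  obtain ⟨S, hS, -, hSeig⟩ := hmu_eig
  have hSeig' := (pairMatrix_mulVec_eq_smul_iff Γ Λ θ (-mu) (Function.uncurry S)).mpr hSeig
  have hS' : Function.uncurry S ≠ 0 := fun h => hS (funext₂ fun a b => congrFun h (a, b))
  have := abs_eigenvalue_sub_second_order_le hK hg hgap₂ (by linarith) (hν.trans hle) hSeig' hS'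
  rwa [thetaMatrix_apply_diag_col Γ hrow, if_pos (Or.inl rfl),
    sum_erase_thetaMatrix_mul_div Γ hΓ hrow] at this

end SecondMoment

theorem sum_sq_div_pos_of_reflTransGen {N : ℕ} (Γ : Matrix (Fin N) (Fin N) ℝ)
    (hoff : ∀ j l, j ≠ l → 0 ≤ Γ j l) (hrow : ∀ j, Γ j j = -∑ l ∈ univ.erase j, Γ j l)
    (Λ : Fin N → ℝ) {jstar j₀ : Fin N} (hmin : ∀ j ≠ jstar, Λ jstar < Λ j) (hj₀ : j₀ ≠ jstar)
    (hpath : Relation.ReflTransGen (fun a b => 0 < Γ a b) j₀ jstar) :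
    0 < ∑ j ∈ univ.erase jstar, Γ j jstar ^ 2 / (Λ j - Λ jstar) := by
  have hdiag : Γ jstar jstar ≤ 0 := by
    rw [hrow, neg_nonpos]
    exact sum_nonneg fun l hl => hoff _ _ (ne_of_mem_erase hl).symm
  -- the last step of the path into `jstar` is not a loop, as `Γ jstar jstar ≤ 0`
  obtain ⟨a, ha, hpos⟩ : ∃ a ≠ jstar, 0 < Γ a jstar := by
    rcases hpath.cases_tail with h | ⟨a, -, ha⟩
    · exact absurd h.symm hj₀
    · exact ⟨a, fun h => by subst h; linarith, ha⟩
  refine sum_pos' (fun j hj => div_nonneg (sq_nonneg _) (sub_nonneg.mpr (hmin j ?_).le))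
    ⟨a, mem_erase.mpr ⟨ha, mem_univ a⟩, div_pos (by positivity) (sub_pos.mpr (hmin a ha))⟩
  exact ne_of_mem_erase hj

theorem stmt11_general {N : ℕ} (hN : 2 ≤ N) (Γ1 : Matrix (Fin N) (Fin N) ℝ)
    (hsym : Γ1.IsSymm)
    (hoff : ∀ j l : Fin N, j ≠ l → 0 ≤ Γ1 j l)
    (hrow : ∀ j : Fin N, Γ1 j j = -∑ l ∈ Finset.univ.erase j, Γ1 j l)
    (Λ : Fin N → ℝ) (jstar : Fin N)
    (hmin : ∀ j : Fin N, j ≠ jstar → Λ jstar < Λ j)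
    (lam mu : ℝ → ℝ)
    (hlam_eig : ∀ θ : ℝ, ∃ v : Fin N → ℝ, v ≠ 0 ∧
      (θ • Γ1 - Matrix.diagonal Λ).mulVec v = (-lam θ) • v)
    (hlam_top : ∀ θ : ℝ, ∀ μ' : ℝ,
      (∃ v : Fin N → ℝ, v ≠ 0 ∧ (θ • Γ1 - Matrix.diagonal Λ).mulVec v = μ' • v) →
      μ' ≤ -lam θ)
    (hmu_eig : ∀ θ : ℝ, ∃ S : Fin N → Fin N → ℝ, S ≠ 0 ∧ (∀ j l, S j l = S l j) ∧
      (fun j l => Theta (θ • Γ1) S j l - Psi Λ S j l) = fun j l => (-mu θ) • S j l)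
    (hmu_top : ∀ θ : ℝ, ∀ μ' : ℝ,
      (∃ S : Fin N → Fin N → ℝ, S ≠ 0 ∧ (∀ j l, S j l = S l j) ∧
        (fun j l => Theta (θ • Γ1) S j l - Psi Λ S j l) = fun j l => μ' • S j l) →
      μ' ≤ -mu θ) :
    ((fun θ : ℝ => mu θ - 2 * lam θ
        + 2 * θ ^ 2 * ∑ j ∈ Finset.univ.erase jstar,
            (Γ1 j jstar) ^ 2 / (Λ j - Λ jstar))
      =O[nhds 0] (fun θ : ℝ => θ ^ 3))
    ∧ ((∀ j l : Fin N, Relation.ReflTransGen (fun a b => 0 < Γ1 a b) j l) →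
        ∃ θ0 > (0 : ℝ), ∀ θ : ℝ, 0 < θ → θ < θ0 → mu θ - 2 * lam θ < 0) := by
  have hrow' : ∀ j, ∑ l, Γ1 j l = 0 := fun j => by
    rw [← add_sum_erase _ _ (mem_univ j), hrow j, neg_add_cancel]
  obtain ⟨g, hg, hgap⟩ := exists_pos_add_le_of_forall_lt Λ jstar hmin
  set K₁ := ∑ i, ∑ j, |Γ1 i j|
  set K₂ := ∑ p, ∑ q, |thetaMatrix Γ1 p q|
  have hO : (fun θ : ℝ => mu θ - 2 * lam θ + 2 * θ ^ 2 * ∑ j ∈ univ.erase jstar,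
      Γ1 j jstar ^ 2 / (Λ j - Λ jstar)) =O[nhds 0] fun θ : ℝ => θ ^ 3 := by
    refine .of_bound (6 * K₂ ^ 3 / g ^ 2 + 2 * (6 * K₁ ^ 3 / g ^ 2)) ?_
    filter_upwards [eventually_abs_mul_le K₁ (by positivity : 0 < g / 8),
      eventually_abs_mul_le K₂ (by positivity : 0 < g / 8)] with θ h₁ h₂
    have hlam := neg_lam_expansion Γ1 hsym Λ jstar (sum_abs_apply_le_sum_sum_abs Γ1) hg hgap h₁
      (hlam_eig θ) (hlam_top θ)
    have hmu := neg_mu_expansion Γ1 hsym hrow' Λ jstar (sum_abs_apply_le_sum_sum_abs _) hg hgap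
      h₂ (hmu_eig θ) (hmu_top θ)
    rw [Real.norm_eq_abs, Real.norm_eq_abs, abs_pow, abs_le]
    rw [abs_le] at hlam hmu
    constructor <;> linarith [hlam.1, hlam.2, hmu.1, hmu.2]
  refine ⟨hO, fun hirr => exists_pos_forall_lt_zero_of_isBigO (mul_pos two_pos ?_)
    (hO.congr_left fun θ => by ring)⟩
  obtain ⟨j₀, hj₀⟩ := Fintype.exists_ne_of_one_lt_card (by rw [Fintype.card_fin]; omega) jstar
  exact sum_sq_div_pos_of_reflTransGen Γ1 hoff hrow Λ hmin hj₀ (hirr j₀ jstar)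

/-- weak coupling `Γ_{jl} = θΓ¹_{jl}` and dissipation with unique
minimum at `j⋆`: `μ - 2λ = -2θ² ∑_{j≠j⋆} (Γ¹_{jj⋆})²/(Λ_j - Λ_{j⋆}) + O(θ³)`;
hence if `Γ¹` is irreducible then `μ - 2λ < 0` for small `θ > 0`. -/
theorem stmt11 {N : ℕ} (hN : 2 ≤ N) (Γ1 : Matrix (Fin N) (Fin N) ℝ)
    (hsym : Γ1.IsSymm)
    (hoff : ∀ j l : Fin N, j ≠ l → 0 ≤ Γ1 j l)
    (hrow : ∀ j : Fin N, Γ1 j j = -∑ l ∈ Finset.univ.erase j, Γ1 j l)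
    (Λ : Fin N → ℝ) (hΛ : ∀ j, 0 ≤ Λ j) (jstar : Fin N)
    (hmin : ∀ j : Fin N, j ≠ jstar → Λ jstar < Λ j)
    (lam mu : ℝ → ℝ)
    (hlam_eig : ∀ θ : ℝ, ∃ v : Fin N → ℝ, v ≠ 0 ∧
      (θ • Γ1 - Matrix.diagonal Λ).mulVec v = (-lam θ) • v)
    (hlam_top : ∀ θ : ℝ, ∀ μ' : ℝ,
      (∃ v : Fin N → ℝ, v ≠ 0 ∧ (θ • Γ1 - Matrix.diagonal Λ).mulVec v = μ' • v) →
      μ' ≤ -lam θ)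
    (hmu_eig : ∀ θ : ℝ, ∃ S : Fin N → Fin N → ℝ, S ≠ 0 ∧ (∀ j l, S j l = S l j) ∧
      (fun j l => Theta (θ • Γ1) S j l - Psi Λ S j l) = fun j l => (-mu θ) • S j l)
    (hmu_top : ∀ θ : ℝ, ∀ μ' : ℝ,
      (∃ S : Fin N → Fin N → ℝ, S ≠ 0 ∧ (∀ j l, S j l = S l j) ∧
        (fun j l => Theta (θ • Γ1) S j l - Psi Λ S j l) = fun j l => μ' • S j l) →
      μ' ≤ -mu θ) :
    ((fun θ : ℝ => mu θ - 2 * lam θ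
        + 2 * θ ^ 2 * ∑ j ∈ Finset.univ.erase jstar,
            (Γ1 j jstar) ^ 2 / (Λ j - Λ jstar))
      =O[nhds 0] (fun θ : ℝ => θ ^ 3))
    ∧ ((∀ j l : Fin N, Relation.ReflTransGen (fun a b => 0 < Γ1 a b) j l) →
        ∃ θ0 > (0 : ℝ), ∀ θ : ℝ, 0 < θ → θ < θ0 → mu θ - 2 * lam θ < 0) :=
  stmt11_general hN Γ1 hsym hoff hrow Λ jstar hmin lam mu hlam_eig hlam_top hmu_eig hmu_top
end
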